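/- arXiv:0808.1404 — 2 statements merged into one kernel-verified Lean document; each statement's English description precedes it below -/
import Mathlib

section
/- Let S be a semigroup and ω a weight on S. Then ℓ¹(S,ω) is a dual Banach algebra with predual c₀(S) if and only if 1_{st⁻¹}/ω ∈ c₀(S) and 1_{t⁻¹s}/ω ∈ c₀(S) for all s, t ∈ S. -/
open Set Filter

/-- A function on `S` "vanishes at infinity" (belongs to `c₀(S)`). -/
def IsC0 {S : Type*} (g : S → ℝ) : Prop := ∀ ε > 0, {x | ε ≤ |g x|}.Finite

/-- A weight on a semigroup: positive and submultiplicative. -/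
def IsWeight {S : Type*} [Mul S] (ω : S → ℝ) : Prop :=
  (∀ s, 0 < ω s) ∧ ∀ s t, ω (s * t) ≤ ω s * ω t

/-- Membership in `ℓ¹(S, ω)`. -/
def MemL1 {S : Type*} (ω f : S → ℝ) : Prop := Summable fun s => |f s| * ω s

/-- Membership in `c₀(S, ω) = {φ ∈ ℓ∞(S,ω) : φ/ω ∈ c₀(S)}`. -/
def IsC0w {S : Type*} (ω φ : S → ℝ) : Prop := IsC0 fun s => φ s / ω s

/-- The left module action `φ · f` of `f ∈ ℓ¹(S,ω)` on `φ ∈ ℓ∞(S,ω)`,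
determined by `⟨φ·f, g⟩ = ⟨φ, f*g⟩`; pointwise `(φ·f)(r) = ∑_u f(u) φ(u r)`. -/
noncomputable def act {S : Type*} [Mul S] (f φ : S → ℝ) : S → ℝ :=
  fun r => ∑' u, f u * φ (u * r)

/-- The right module action `f · φ`, determined by `⟨f·φ, g⟩ = ⟨φ, g*f⟩`;
pointwise `(f·φ)(r) = ∑_u f(u) φ(r u)`. -/
noncomputable def actR {S : Type*} [Mul S] (f φ : S → ℝ) : S → ℝ :=
  fun r => ∑' u, f u * φ (r * u)

/-- A semigroup is weakly cancellative if `s⁻¹F` and `Fs⁻¹` are finite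
for every `s` and every finite `F`. -/
def WeaklyCancellative (S : Type*) [Mul S] : Prop :=
  ∀ (s : S) (F : Finset S), {t | s * t ∈ F}.Finite ∧ {t | t * s ∈ F}.Finite

/-!
Necessity: on point masses the actions are `act δ_t δ_s = 1_{t⁻¹s}` and `actR δ_t δ_s = 1_{st⁻¹}`.

Sufficiency: submultiplicativity of `ω` gives `|act f φ| ≤ ‖f‖_{ℓ¹(ω)} · sup |φ/ω| · ω`, so cutting `f` down
to a finite set `F`, and `φ` down to the finite set `G` where `|φ/ω| ≥ δ`, changes `act f φ / ω` by a
uniformly small amount. The truncated action is a finite combination of the functions `1_{t⁻¹s}/ω`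
with `t ∈ F`, `s ∈ G`, and `c₀` is closed under uniform limits.
-/

section

variable {S : Type*}

lemma isC0_iff_tendsto {g : S → ℝ} : IsC0 g ↔ Tendsto g cofinite (nhds 0) := by
  simp only [Metric.tendsto_nhds, eventually_cofinite, Real.dist_eq, sub_zero, not_lt]
  rfl

lemma IsC0.const_mul {g : S → ℝ} (h : IsC0 g) (c : ℝ) : IsC0 fun x => c * g x :=
  isC0_iff_tendsto.2 (by simpa using (isC0_iff_tendsto.1 h).const_mul c)

lemma IsC0.finset_sum {ι : Type*} (s : Finset ι) {g : ι → S → ℝ} (h : ∀ i ∈ s, IsC0 (g i)) :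
    IsC0 fun x => ∑ i ∈ s, g i x :=
  isC0_iff_tendsto.2 (by simpa using tendsto_finsetSum s fun i hi => isC0_iff_tendsto.1 (h i hi))

lemma isC0_of_finite_support {g : S → ℝ} (hg : (Function.support g).Finite) : IsC0 g :=
  fun ε hε => hg.subset fun x hx => by
    rw [Function.mem_support]
    rintro h
    rw [mem_ofPred_eq, h, abs_zero] at hx
    linarith

lemma IsC0.exists_bound {g : S → ℝ} (h : IsC0 g) : ∃ C, 0 ≤ C ∧ ∀ x, |g x| ≤ C := by
  obtain ⟨C, hC⟩ := ((h 1 one_pos).image fun x => |g x|).bddAbove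
  refine ⟨max C 1, le_max_of_le_right zero_le_one, fun x => ?_⟩
  by_cases hx : 1 ≤ |g x|
  · exact le_max_of_le_left (hC (mem_image_of_mem _ hx))
  · exact le_max_of_le_right (not_le.1 hx).le

lemma IsC0.of_forall_approx {g : S → ℝ}
    (h : ∀ ε > 0, ∃ g', IsC0 g' ∧ ∀ x, |g x - g' x| ≤ ε) : IsC0 g := by
  intro ε hε
  obtain ⟨g', hg', hclose⟩ := h (ε / 2) (half_pos hε)
  refine (hg' (ε / 2) (half_pos hε)).subset fun x hx => ?_
  have := abs_sub_abs_le_abs_sub (g x) (g' x)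
  simp only [mem_ofPred_eq] at hx ⊢
  linarith [hclose x]

lemma IsC0w.exists_abs_le {ω φ : S → ℝ} (hω : ∀ s, 0 < ω s) (hφ : IsC0w ω φ) :
    ∃ C, 0 ≤ C ∧ ∀ x, |φ x| ≤ C * ω x := by
  obtain ⟨C, hC, hbound⟩ := IsC0.exists_bound hφ
  refine ⟨C, hC, fun x => ?_⟩
  have := hbound x
  rwa [abs_div, abs_of_pos (hω x), div_le_iff₀ (hω x)] at this

lemma abs_indicator_mul {ω f : S → ℝ} (s : Set S) (u : S) :
    |s.indicator f u| * ω u = s.indicator (fun u => |f u| * ω u) u := by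
  by_cases hu : u ∈ s <;> simp [hu]

lemma MemL1.indicator {ω f : S → ℝ} (hf : MemL1 ω f) (s : Set S) : MemL1 ω (s.indicator f) := by
  simpa only [MemL1, abs_indicator_mul] using Summable.indicator hf s

lemma exists_finset_tsum_compl_lt (ω f : S → ℝ) {δ : ℝ} (hδ : 0 < δ) :
    ∃ F : Finset S, ∑' u, |(↑F : Set S)ᶜ.indicator f u| * ω u < δ := by
  obtain ⟨F, hF⟩ := ((tendsto_tsum_compl_atTop_zero fun u => |f u| * ω u).eventually
    (gt_mem_nhds hδ)).exists
  refine ⟨F, ?_⟩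
  simp only [abs_indicator_mul, ← tsum_subtype]
  exact hF

-- `act = actAlong (· * ·)` and `actR = actAlong (fun u r => r * u)`.
noncomputable def actAlong (m : S → S → S) (f φ : S → ℝ) : S → ℝ :=
  fun r => ∑' u, f u * φ (m u r)

section actAlong

variable {m : S → S → S} {ω f φ : S → ℝ} {C : ℝ}

lemma norm_mul_apply_le (hsub : ∀ u r, ω (m u r) ≤ ω u * ω r) (hC : 0 ≤ C)
    (hφ : ∀ x, |φ x| ≤ C * ω x) (u r : S) :
    ‖f u * φ (m u r)‖ ≤ C * ω r * (|f u| * ω u) := by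
  rw [Real.norm_eq_abs, abs_mul]
  calc |f u| * |φ (m u r)| ≤ |f u| * (C * (ω u * ω r)) := by
        gcongr
        exact (hφ _).trans (by gcongr; exact hsub u r)
    _ = C * ω r * (|f u| * ω u) := by ring

lemma summable_mul_apply (hsub : ∀ u r, ω (m u r) ≤ ω u * ω r) (hC : 0 ≤ C)
    (hφ : ∀ x, |φ x| ≤ C * ω x) (hf : MemL1 ω f) (r : S) :
    Summable fun u => f u * φ (m u r) :=
  Summable.of_norm_bounded (hf.mul_left (C * ω r)) (norm_mul_apply_le hsub hC hφ · r)

lemma abs_actAlong_le (hsub : ∀ u r, ω (m u r) ≤ ω u * ω r) (hC : 0 ≤ C)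
    (hφ : ∀ x, |φ x| ≤ C * ω x) (hf : MemL1 ω f) (r : S) :
    |actAlong m f φ r| ≤ C * (∑' u, |f u| * ω u) * ω r :=
  (tsum_of_norm_bounded (hf.hasSum.mul_left (C * ω r)) (norm_mul_apply_le hsub hC hφ · r)).trans_eq
    (by ring)

lemma actAlong_add_left {f₁ f₂ : S → ℝ} {r : S} (h₁ : Summable fun u => f₁ u * φ (m u r))
    (h₂ : Summable fun u => f₂ u * φ (m u r)) :
    actAlong m (f₁ + f₂) φ r = actAlong m f₁ φ r + actAlong m f₂ φ r := by
  simp only [actAlong, Pi.add_apply, add_mul]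
  exact h₁.tsum_add h₂

lemma actAlong_add_right {φ₁ φ₂ : S → ℝ} {r : S} (h₁ : Summable fun u => f u * φ₁ (m u r))
    (h₂ : Summable fun u => f u * φ₂ (m u r)) :
    actAlong m f (φ₁ + φ₂) r = actAlong m f φ₁ r + actAlong m f φ₂ r := by
  simp only [actAlong, Pi.add_apply, mul_add]
  exact h₁.tsum_add h₂

lemma actAlong_indicator_finset (F G : Finset S) (f φ : S → ℝ) (r : S) :
    actAlong m ((F : Set S).indicator f) ((G : Set S).indicator φ) r =
      ∑ u ∈ F, ∑ g ∈ G, f u * φ g * {r | m u r = g}.indicator 1 r := by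
  classical
  rw [actAlong, tsum_eq_sum (s := F) fun u hu => by simp [hu]]
  refine Finset.sum_congr rfl fun u hu => ?_
  simp [hu, Set.indicator_apply]

lemma isC0_actAlong_indicator_finset
    (hcond : ∀ s t : S, IsC0 fun r => {r | m t r = s}.indicator (1 : S → ℝ) r / ω r)
    (F G : Finset S) (f φ : S → ℝ) :
    IsC0 fun r => actAlong m ((F : Set S).indicator f) ((G : Set S).indicator φ) r / ω r := by
  simp only [actAlong_indicator_finset, Finset.sum_div, mul_div_assoc]
  exact IsC0.finset_sum _ fun u _ => IsC0.finset_sum _ fun g _ => (hcond g u).const_mul _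

lemma abs_actAlong_sub_le {ψ : S → ℝ} {δ : ℝ} (hsub : ∀ u r, ω (m u r) ≤ ω u * ω r)
    (hC : 0 ≤ C) (hδ : 0 ≤ δ) (hψ : ∀ x, |ψ x| ≤ C * ω x) (hφψ : ∀ x, |(φ - ψ) x| ≤ δ * ω x)
    (hf : MemL1 ω f) (s : Set S) (r : S) :
    |actAlong m f φ r - actAlong m (s.indicator f) ψ r| ≤
      (C * ∑' u, |sᶜ.indicator f u| * ω u + δ * ∑' u, |f u| * ω u) * ω r := by
  have hsplit_φ : actAlong m f φ r = actAlong m f ψ r + actAlong m f (φ - ψ) r := by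
    rw [← actAlong_add_right (summable_mul_apply hsub hC hψ hf r)
      (summable_mul_apply hsub hδ hφψ hf r), add_sub_cancel]
  have hsplit_f : actAlong m f ψ r =
      actAlong m (s.indicator f) ψ r + actAlong m (sᶜ.indicator f) ψ r := by
    rw [← actAlong_add_left (summable_mul_apply hsub hC hψ (hf.indicator _) r)
      (summable_mul_apply hsub hC hψ (hf.indicator _) r), indicator_self_add_compl]
  rw [hsplit_φ, hsplit_f, add_assoc, add_sub_cancel_left, add_mul]
  exact (abs_add_le _ _).trans (add_le_add (abs_actAlong_le hsub hC hψ (hf.indicator _) r)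
    (abs_actAlong_le hsub hδ hφψ hf r))

lemma isC0w_actAlong (hω : ∀ s, 0 < ω s) (hsub : ∀ u r, ω (m u r) ≤ ω u * ω r)
    (hcond : ∀ s t : S, IsC0 fun r => {r | m t r = s}.indicator (1 : S → ℝ) r / ω r)
    (hφ : IsC0w ω φ) (hf : MemL1 ω f) : IsC0w ω (actAlong m f φ) := by
  obtain ⟨C, hC, hφC⟩ := hφ.exists_abs_le hω
  set M := ∑' u, |f u| * ω u
  have hM : 0 ≤ M := tsum_nonneg fun u => mul_nonneg (abs_nonneg _) (hω u).le
  refine IsC0.of_forall_approx fun ε hε => ?_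
  set δ := ε / (M + C + 1)
  have hδ : 0 < δ := by positivity
  obtain ⟨F, hF⟩ := exists_finset_tsum_compl_lt ω f hδ
  obtain ⟨G, hG⟩ := (hφ δ hδ).exists_finset_coe
  set ψ := (G : Set S).indicator φ
  have hψC : ∀ x, |ψ x| ≤ C * ω x := fun x =>
    (Real.norm_eq_abs (ψ x) ▸ norm_indicator_le_norm_self _ _).trans (hφC x)
  have hφψ : ∀ x, |(φ - ψ) x| ≤ δ * ω x := by
    intro x
    by_cases hx : x ∈ (G : Set S)
    · simpa [ψ, hx] using mul_nonneg hδ.le (hω x).le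
    · have hsmall : |φ x| < δ * ω x := by
        rw [← div_lt_iff₀ (hω x), ← abs_of_pos (hω x), ← abs_div, ← not_le]
        rwa [hG] at hx
      simpa [ψ, hx] using hsmall.le
  have hδε : C * ∑' u, |(↑F : Set S)ᶜ.indicator f u| * ω u + δ * M ≤ ε := by
    have : δ * (M + C + 1) = ε := div_mul_cancel₀ _ (by positivity)
    nlinarith [mul_le_mul_of_nonneg_left hF.le hC]
  refine ⟨fun r => actAlong m ((F : Set S).indicator f) ψ r / ω r,
    isC0_actAlong_indicator_finset hcond F G f φ, fun r => ?_⟩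
  rw [← sub_div, abs_div, abs_of_pos (hω r), div_le_iff₀ (hω r)]
  exact (abs_actAlong_sub_le hsub hC hδ.le hψC hφψ hf _ r).trans
    (mul_le_mul_of_nonneg_right hδε (hω r).le)

end actAlong

lemma actAlong_indicator_singleton (m : S → S → S) (s t : S) :
    actAlong m (({t} : Set S).indicator 1) (({s} : Set S).indicator 1) =
      {r | m t r = s}.indicator 1 :=
  funext fun r => by simpa using actAlong_indicator_finset (m := m) {t} {s} 1 1 r

lemma isC0w_indicator_singleton (ω : S → ℝ) (s : S) : IsC0w ω (({s} : Set S).indicator 1) :=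
  isC0_of_finite_support <| (finite_singleton s).subset fun x hx => by
    by_contra hxs
    simp_all

lemma memL1_indicator_singleton (ω : S → ℝ) (t : S) : MemL1 ω (({t} : Set S).indicator 1) :=
  (hasSum_single t fun u hu => by simp [hu]).summable

end

/-- `ℓ¹(S,ω)` is a dual Banach algebra with predual `c₀(S)` iff
`1_{st⁻¹}/ω ∈ c₀(S)` and `1_{t⁻¹s}/ω ∈ c₀(S)` for all `s, t ∈ S`. -/
theorem dual_iff {S : Type*} [Semigroup S] {ω : S → ℝ} (hω : IsWeight ω) :
    (∀ φ : S → ℝ, IsC0w ω φ → ∀ f : S → ℝ, MemL1 ω f →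
        IsC0w ω (act f φ) ∧ IsC0w ω (actR f φ)) ↔
      ∀ s t : S,
        (IsC0 fun r => Set.indicator {r | r * t = s} (1 : S → ℝ) r / ω r) ∧
        (IsC0 fun r => Set.indicator {r | t * r = s} (1 : S → ℝ) r / ω r) := by
  constructor
  · intro h s t
    obtain ⟨hl, hr⟩ := h _ (isC0w_indicator_singleton ω s) _ (memL1_indicator_singleton ω t)
    change IsC0w ω (actAlong (· * ·) _ _) at hl
    change IsC0w ω (actAlong (fun u r => r * u) _ _) at hr
    rw [actAlong_indicator_singleton] at hl hr
    exact ⟨hr, hl⟩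
  · intro h φ hφ f hf
    exact ⟨isC0w_actAlong hω.1 hω.2 (fun s t => (h s t).2) hφ hf,
      isC0w_actAlong hω.1 (fun u r => (hω.2 r u).trans_eq (mul_comm _ _)) (fun s t => (h s t).1) hφ hf⟩
end

section
/- Let S₁ be a weakly cancellative semigroup with weight ω₁, and S₂ a semigroup with weight ω₂ satisfying 1/ω₂ ∈ c₀(S₂). Then for the product semigroup S₁ × S₂ with weight ω(x,y) = ω₁(x)ω₂(y), the functions 1_{(s,t)(s',t')⁻¹}/ω and 1_{(s',t')⁻¹(s,t)}/ω belong to c₀(S₁ × S₂) for all (s,t), (s',t') ∈ S₁ × S₂; hence ℓ¹(S₁×S₂, ω₁×ω₂) is a dual Banach algebra with predual c₀(S₁×S₂). -/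
/-!
The indicator of `q⁻¹p` in `S₁ × S₂` splits as `1_{q₁⁻¹p₁} ⊗ 1_{q₂⁻¹p₂}`: the first factor has
finite support by weak cancellativity and the second is dominated by `1/ω₂ ∈ c₀`, so their
quotient by `ω₁ ⊗ ω₂` is in `c₀`. For the module actions, write
`(φ·f)(r)/ω(r) = ∑ᵤ f(u) φ(ur)/ω(r)`. Each term tends to `0` as `r` leaves finite sets: where `ur`
lands in the finite set on which `|φ/ω|` is large, this is the `c₀` property of `1_{u⁻¹v}/ω`, and
elsewhere `ω(ur) ≤ ω(u)ω(r)` makes it small. With `C` a bound for `|φ/ω|`, the terms are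
dominated by the summable `C |f(u)| ω(u)`, so Tannery's theorem gives the limit of the sum.
-/

open Set Filter

open Topology

theorem isC0_iff_tendsto_cofinite {S : Type*} {g : S → ℝ} :
    IsC0 g ↔ Tendsto g cofinite (𝓝 0) := by
  simp only [IsC0, Metric.tendsto_nhds, eventually_cofinite, Real.dist_eq, sub_zero, not_lt]

namespace IsC0

variable {S : Type*} {f g : S → ℝ}

theorem exists_pos_bound (hg : IsC0 g) : ∃ C > 0, ∀ x, |g x| ≤ C := by
  obtain ⟨C, hC⟩ := (isC0_iff_tendsto_cofinite.1 hg).abs.bddAbove_range_of_cofinite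
  exact ⟨max C 1, by positivity, fun x => (hC ⟨x, rfl⟩).trans (le_max_left _ _)⟩

theorem of_abs_le (hg : IsC0 g) (hfg : ∀ x, |f x| ≤ |g x|) : IsC0 f :=
  fun ε hε => (hg ε hε).subset fun _ hx => le_trans hx (hfg _)

theorem of_finite_support (hf : (Function.support f).Finite) : IsC0 f :=
  fun ε hε => hf.subset fun x (hx : ε ≤ |f x|) hfx => by
    rw [hfx, abs_zero] at hx
    linarith

theorem prod_mul {T : Type*} {g₁ : S → ℝ} {g₂ : T → ℝ} (h₁ : IsC0 g₁) (h₂ : IsC0 g₂) :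
    IsC0 fun r : S × T => g₁ r.1 * g₂ r.2 := by
  obtain ⟨C₁, hC₁, hg₁⟩ := h₁.exists_pos_bound
  obtain ⟨C₂, hC₂, hg₂⟩ := h₂.exists_pos_bound
  intro ε hε
  refine ((h₁ (ε / C₂) (by positivity)).prod (h₂ (ε / C₁) (by positivity))).subset ?_
  rintro ⟨x, y⟩ (hxy : ε ≤ |g₁ x * g₂ y|)
  rw [abs_mul] at hxy
  constructor
  · show ε / C₂ ≤ |g₁ x|
    rw [div_le_iff₀ hC₂]
    exact hxy.trans (mul_le_mul_of_nonneg_left (hg₂ y) (abs_nonneg _))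
  · show ε / C₁ ≤ |g₂ y|
    rw [div_le_iff₀ hC₁]
    exact hxy.trans ((mul_le_mul_of_nonneg_right (hg₁ x) (abs_nonneg _)).trans_eq (mul_comm _ _))

end IsC0

theorem isC0_indicator_prod_div {S₁ S₂ : Type*} {ω₁ : S₁ → ℝ} {ω₂ : S₂ → ℝ} {A : Set S₁}
    {B : Set S₂} (hA : A.Finite) (h₂ : IsC0 fun y => 1 / ω₂ y) :
    IsC0 fun r : S₁ × S₂ => (A ×ˢ B).indicator 1 r / (ω₁ r.1 * ω₂ r.2) := by
  have h₁ : IsC0 fun x => A.indicator 1 x / ω₁ x :=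
    IsC0.of_finite_support <| hA.subset fun x hx =>
      of_not_not fun hxA => hx (by simp [indicator_of_notMem hxA])
  have hB : IsC0 fun y => B.indicator 1 y / ω₂ y :=
    h₂.of_abs_le fun y => by by_cases hy : y ∈ B <;> simp [hy]
  refine (h₁.prod_mul hB).of_abs_le fun ⟨x, y⟩ => le_of_eq ?_
  rw [indicator_prod_one, div_mul_div_comm]

theorem IsWeight.prod {S₁ S₂ : Type*} [Mul S₁] [Mul S₂] {ω₁ : S₁ → ℝ} {ω₂ : S₂ → ℝ}
    (hω₁ : IsWeight ω₁) (hω₂ : IsWeight ω₂) : IsWeight fun r : S₁ × S₂ => ω₁ r.1 * ω₂ r.2 :=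
  ⟨fun r => mul_pos (hω₁.1 r.1) (hω₂.1 r.2), fun r s =>
    (mul_le_mul (hω₁.2 r.1 s.1) (hω₂.2 r.2 s.2) (hω₂.1 _).le
      (mul_pos (hω₁.1 _) (hω₁.1 _)).le).trans_eq (mul_mul_mul_comm _ _ _ _)⟩

theorem setOf_mul_left_eq_prod {S₁ S₂ : Type*} [Mul S₁] [Mul S₂] (p q : S₁ × S₂) :
    {r | q * r = p} = {x | q.1 * x = p.1} ×ˢ {y | q.2 * y = p.2} := by
  ext r
  simp [Prod.ext_iff]

theorem setOf_mul_right_eq_prod {S₁ S₂ : Type*} [Mul S₁] [Mul S₂] (p q : S₁ × S₂) :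
    {r | r * q = p} = {x | x * q.1 = p.1} ×ˢ {y | y * q.2 = p.2} := by
  ext r
  simp [Prod.ext_iff]

section Translate

/-! `μ u` plays the role of left translation `r ↦ u * r` or right translation `r ↦ r * u`. -/

variable {T : Type*} {ω : T → ℝ} {μ : T → T → T} {φ : T → ℝ}

theorem isC0_translate_div (hpos : ∀ t, 0 < ω t) (hsub : ∀ u r, ω (μ u r) ≤ ω u * ω r) {u : T}
    (hind : ∀ v, IsC0 fun r => {r | μ u r = v}.indicator 1 r / ω r)
    (hφ : IsC0 fun t => φ t / ω t) :
    IsC0 fun r => φ (μ u r) / ω r := by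
  intro ε hε
  have hG : {v | ε / ω u ≤ |φ v / ω v|}.Finite := hφ _ (div_pos hε (hpos u))
  have hφG : ∀ v ∈ {v | ε / ω u ≤ |φ v / ω v|}, 0 < |φ v| :=
    fun v (hv : ε / ω u ≤ |φ v / ω v|) =>
      abs_pos.2 fun h0 => by
        rw [h0, zero_div, abs_zero] at hv
        linarith [div_pos hε (hpos u)]
  refine (hG.biUnion' fun v hv => hind v (ε / |φ v|) (div_pos hε (hφG v hv))).subset ?_
  intro r (hr : ε ≤ |φ (μ u r) / ω r|)
  rw [abs_div, abs_of_pos (hpos r), le_div_iff₀ (hpos r)] at hr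
  have hv : ε / ω u ≤ |φ (μ u r) / ω (μ u r)| := by
    rw [abs_div, abs_of_pos (hpos _), div_le_div_iff₀ (hpos u) (hpos _)]
    calc ε * ω (μ u r) ≤ ε * (ω u * ω r) := mul_le_mul_of_nonneg_left (hsub u r) hε.le
      _ = ε * ω r * ω u := by ring
      _ ≤ |φ (μ u r)| * ω u := mul_le_mul_of_nonneg_right hr (hpos u).le
  refine mem_biUnion (x := μ u r) hv ?_
  show ε / |φ (μ u r)| ≤ |{r' | μ u r' = μ u r}.indicator 1 r / ω r|
  rw [indicator_of_mem (show r ∈ {r' | μ u r' = μ u r} from rfl), Pi.one_apply, abs_div,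
    abs_one, abs_of_pos (hpos r), div_le_div_iff₀ (hφG _ hv) (hpos r), one_mul]
  exact hr

theorem isC0_tsum_translate_div (hpos : ∀ t, 0 < ω t) (hsub : ∀ u r, ω (μ u r) ≤ ω u * ω r)
    (hind : ∀ u v, IsC0 fun r => {r | μ u r = v}.indicator 1 r / ω r)
    (hφ : IsC0 fun t => φ t / ω t) {f : T → ℝ} (hf : Summable fun t => |f t| * ω t) :
    IsC0 fun r => (∑' u, f u * φ (μ u r)) / ω r := by
  obtain ⟨C, hC, hφC⟩ := hφ.exists_pos_bound
  have hbound : ∀ u r, |φ (μ u r) / ω r| ≤ C * ω u := fun u r => by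
    have h := hφC (μ u r)
    rw [abs_div, abs_of_pos (hpos _), div_le_iff₀ (hpos _)] at h ⊢
    calc |φ (μ u r)| ≤ C * ω (μ u r) := h
      _ ≤ C * (ω u * ω r) := mul_le_mul_of_nonneg_left (hsub u r) hC.le
      _ = C * ω u * ω r := by ring
  have hterm : ∀ u, Tendsto (fun r => f u * (φ (μ u r) / ω r)) cofinite (𝓝 0) := fun u => by
    simpa using (isC0_iff_tendsto_cofinite.1
      (isC0_translate_div hpos hsub (hind u) hφ)).const_mul (f u)
  have hdom : ∀ᶠ r in cofinite, ∀ u, ‖f u * (φ (μ u r) / ω r)‖ ≤ C * (|f u| * ω u) :=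
    Eventually.of_forall fun r u => by
      rw [Real.norm_eq_abs, abs_mul, mul_left_comm]
      exact mul_le_mul_of_nonneg_left (hbound u r) (abs_nonneg _)
  rw [isC0_iff_tendsto_cofinite]
  convert tendsto_tsum_of_dominated_convergence (hf.mul_left C) hterm hdom using 2 with r
  · simp_rw [← tsum_div_const, mul_div_assoc]
  · exact tsum_zero.symm

end Translate

/-- If `S₁` is weakly cancellative with weight `ω₁`, and `ω₂` is a weight on `S₂` with
`1/ω₂ ∈ c₀(S₂)`, then for the product semigroup `S₁ × S₂` with product weight `ω₁ × ω₂`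
all the functions `1_{pq⁻¹}/ω, 1_{q⁻¹p}/ω` belong to `c₀(S₁ × S₂)`; hence
`ℓ¹(S₁×S₂, ω₁×ω₂)` is a dual Banach algebra with predual `c₀(S₁×S₂)`. -/
theorem dual_of_prod {S₁ S₂ : Type*} [Semigroup S₁] [Semigroup S₂]
    {ω₁ : S₁ → ℝ} {ω₂ : S₂ → ℝ} (hω₁ : IsWeight ω₁) (hω₂ : IsWeight ω₂)
    (hS₁ : WeaklyCancellative S₁) (h₂ : IsC0 fun y => 1 / ω₂ y) :
    (∀ p q : S₁ × S₂,
        (IsC0 fun r : S₁ × S₂ =>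
          Set.indicator {r | q * r = p} (1 : S₁ × S₂ → ℝ) r / (ω₁ r.1 * ω₂ r.2)) ∧
        (IsC0 fun r : S₁ × S₂ =>
          Set.indicator {r | r * q = p} (1 : S₁ × S₂ → ℝ) r / (ω₁ r.1 * ω₂ r.2))) ∧
      (∀ φ : S₁ × S₂ → ℝ, IsC0w (fun r => ω₁ r.1 * ω₂ r.2) φ →
        ∀ f : S₁ × S₂ → ℝ, MemL1 (fun r => ω₁ r.1 * ω₂ r.2) f →
          IsC0w (fun r => ω₁ r.1 * ω₂ r.2) (act f φ) ∧
          IsC0w (fun r => ω₁ r.1 * ω₂ r.2) (actR f φ)) := by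
  obtain ⟨hpos, hsub⟩ := hω₁.prod hω₂
  have hL : ∀ p q : S₁ × S₂, IsC0 fun r : S₁ × S₂ =>
      {r | q * r = p}.indicator (1 : S₁ × S₂ → ℝ) r / (ω₁ r.1 * ω₂ r.2) := fun p q => by
    rw [setOf_mul_left_eq_prod]
    exact isC0_indicator_prod_div (by simpa using (hS₁ q.1 {p.1}).1) h₂
  have hR : ∀ p q : S₁ × S₂, IsC0 fun r : S₁ × S₂ =>
      {r | r * q = p}.indicator (1 : S₁ × S₂ → ℝ) r / (ω₁ r.1 * ω₂ r.2) := fun p q => by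
    rw [setOf_mul_right_eq_prod]
    exact isC0_indicator_prod_div (by simpa using (hS₁ q.1 {p.1}).2) h₂
  refine ⟨fun p q => ⟨hL p q, hR p q⟩, fun φ hφ f hf => ⟨?_, ?_⟩⟩
  · exact isC0_tsum_translate_div hpos hsub (fun u v => hL v u) hφ hf
  · exact isC0_tsum_translate_div hpos (fun u r => (hsub r u).trans_eq (mul_comm _ _))
      (fun u v => hR v u) hφ hf
end
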